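/- For complex x, z small in absolute value and nonzero z, the function (1/z)·Σ_{l=1}^∞ (-1)^l (1/(x+z-l) - 1/(x-z-l)) has power series expansion in x and z whose coefficient of x^{k-2s} z^{2s-2} (for integers k ≥ 2s ≥ 2) equals 2·C(k-1,2s-1)·Σ_{l=1}^∞ (-1)^{l-1}/l^k. -/

import Mathlib

open Complex Finset

namespace CoeffExpansionAux

noncomputable def S (k : ℕ) : ℂ := ∑' l : ℕ, (-1 : ℂ) ^ l / ((l : ℂ) + 1) ^ k

lemma norm_cast_add_one (l : ℕ) : ‖((l : ℂ) + 1)‖ = (l : ℝ) + 1 := by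
  have h : ((l : ℂ) + 1) = ((l + 1 : ℕ) : ℂ) := by push_cast; ring
  rw [h, Complex.norm_natCast]; push_cast; ring

lemma summable_inv_pow {k : ℕ} (hk : 2 ≤ k) :
    Summable (fun l : ℕ => (1 : ℝ) / ((l : ℝ) + 1) ^ k) := by
  have h1 : Summable (fun n : ℕ => (1 : ℝ) / (n : ℝ) ^ k) :=
    Real.summable_one_div_nat_pow.2 (by omega)
  have h2 := (summable_nat_add_iff (f := fun n : ℕ => (1 : ℝ) / (n : ℝ) ^ k) 1).2 h1
  simpa using h2

lemma norm_term (l k : ℕ) : ‖(-1 : ℂ) ^ l / ((l : ℂ) + 1) ^ k‖ = 1 / ((l : ℝ) + 1) ^ k := by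
  rw [norm_div, norm_pow, norm_pow, norm_neg, norm_one, one_pow, norm_cast_add_one]

lemma summable_norm_term {k : ℕ} (hk : 2 ≤ k) :
    Summable (fun l : ℕ => ‖(-1 : ℂ) ^ l / ((l : ℂ) + 1) ^ k‖) :=
  (summable_inv_pow hk).congr fun l => (norm_term l k).symm

lemma summable_S {k : ℕ} (hk : 2 ≤ k) :
    Summable (fun l : ℕ => (-1 : ℂ) ^ l / ((l : ℂ) + 1) ^ k) :=
  Summable.of_norm (summable_norm_term hk)

lemma norm_S_le {k : ℕ} (hk : 2 ≤ k) :
    ‖S k‖ ≤ ∑' l : ℕ, (1 : ℝ) / ((l : ℝ) + 1) ^ 2 := by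
  have h1 := summable_norm_term hk
  refine (norm_tsum_le_tsum_norm h1).trans ?_
  refine h1.tsum_le_tsum (fun l => ?_) (summable_inv_pow le_rfl)
  rw [norm_term]
  have hb : (1 : ℝ) ≤ (l : ℝ) + 1 := le_add_of_nonneg_left (Nat.cast_nonneg l)
  have : ((l : ℝ) + 1) ^ 2 ≤ ((l : ℝ) + 1) ^ k := pow_le_pow_right₀ hb hk
  exact one_div_le_one_div_of_le (by positivity) this

lemma geom {w : ℂ} (hw : ‖w‖ < 1) (l : ℕ) :
    HasSum (fun n : ℕ => w ^ n / ((l : ℂ) + 1) ^ (n + 1)) (-(1 / (w - ((l : ℂ) + 1)))) := by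
  set c : ℂ := (l : ℂ) + 1 with hc
  have hcnorm : (1 : ℝ) ≤ ‖c‖ := by
    rw [hc, norm_cast_add_one]; exact le_add_of_nonneg_left (Nat.cast_nonneg l)
  have hc0 : c ≠ 0 := by
    intro h; rw [h] at hcnorm; simp at hcnorm; linarith
  have hwc : w - c ≠ 0 := by
    intro h
    rw [sub_eq_zero.1 h] at hw; linarith
  have hr : ‖w / c‖ < 1 := by
    rw [norm_div]
    exact lt_of_le_of_lt (div_le_self (norm_nonneg w) hcnorm) hw
  have h2 := (hasSum_geometric_of_norm_lt_one hr).div_const c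
  have hmul : c * (1 - w / c) = c - w := by field_simp
  have hval : (1 - w / c)⁻¹ / c = -(1 / (w - c)) := by
    rw [one_div, ← inv_neg, neg_sub, ← hmul, mul_inv, div_eq_mul_inv, mul_comm]
  simpa only [div_pow, div_div, ← pow_succ, hval] using h2

lemma per_l {x z : ℂ} (h1 : ‖x + z‖ < 1) (h2 : ‖x - z‖ < 1) (l : ℕ) :
    HasSum (fun n : ℕ => (-1 : ℂ) ^ l * (((x + z) ^ n - (x - z) ^ n) / ((l : ℂ) + 1) ^ (n + 1)))
      ((-1 : ℂ) ^ (l + 1) * (1 / (x + z - ((l : ℂ) + 1)) - 1 / (x - z - ((l : ℂ) + 1)))) := by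
  have h := ((geom h1 l).sub (geom h2 l)).mul_left ((-1 : ℂ) ^ l)
  convert h using 1
  · rfl
  · funext n; rw [sub_div]
  · rw [pow_succ]; ring

lemma binom_diff (x z : ℂ) (n : ℕ) :
    (x + z) ^ n - (x - z) ^ n
      = ∑ b ∈ range ((n + 1) / 2),
          2 * (n.choose (2 * b + 1) : ℂ) * x ^ (n - (2 * b + 1)) * z ^ (2 * b + 1) := by
  have key : ∀ t : ℕ → ℂ, (∀ j, Even j → t j = 0) →
      ∑ j ∈ range (n + 1), t j = ∑ b ∈ range ((n + 1) / 2), t (2 * b + 1) := by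
    intro t ht
    rw [show ∑ b ∈ range ((n + 1) / 2), t (2 * b + 1)
          = ∑ j ∈ (range ((n + 1) / 2)).image (fun b => 2 * b + 1), t j from
        (Finset.sum_image (fun a _ b _ h => by omega)).symm]
    refine (Finset.sum_subset ?_ ?_).symm
    · intro j hj
      simp only [Finset.mem_image, Finset.mem_range] at hj ⊢
      obtain ⟨b, hb, rfl⟩ := hj; omega
    · intro j hj hj'
      simp only [Finset.mem_image, Finset.mem_range] at hj hj'
      apply ht
      rcases Nat.even_or_odd j with he | ho
      · exact he
      · exfalso
        obtain ⟨b, rfl⟩ := ho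
        exact hj' ⟨b, by omega, rfl⟩
  have h1 : (x + z) ^ n = ∑ j ∈ range (n + 1), z ^ j * x ^ (n - j) * (n.choose j : ℂ) := by
    rw [add_comm x z, add_pow]
  have h2 : (x - z) ^ n = ∑ j ∈ range (n + 1), (-z) ^ j * x ^ (n - j) * (n.choose j : ℂ) := by
    rw [sub_eq_add_neg, add_comm x (-z), add_pow]
  rw [h1, h2, ← Finset.sum_sub_distrib,
    key _ (fun j hj => by rw [hj.neg_pow]; ring)]
  refine Finset.sum_congr rfl fun b _ => ?_
  rw [Odd.neg_pow ⟨b, by ring⟩]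
  ring

noncomputable def Mc : ℝ := ∑' l : ℕ, (1 : ℝ) / ((l : ℝ) + 1) ^ 2

lemma Mc_nonneg : 0 ≤ Mc := tsum_nonneg fun l => by positivity

noncomputable def gF (x z : ℂ) (p : ℕ × ℕ) : ℂ :=
  (-1 : ℂ) ^ p.1 * (((x + z) ^ p.2 - (x - z) ^ p.2) / ((p.1 : ℂ) + 1) ^ (p.2 + 1))

noncomputable def FF (x z : ℂ) (q : ℕ × ℕ) : ℂ :=
  2 * ((q.1.choose (2 * q.2 + 1)) : ℂ) * S (q.1 + 1) * x ^ (q.1 - (2 * q.2 + 1)) * z ^ (2 * q.2)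

def eF (p : ℕ × ℕ) : ℕ × ℕ := (p.1 + 2 * p.2 + 1, p.2)

noncomputable def HF (x z : ℂ) (q : ℕ × ℕ) : ℝ :=
  2 * Mc * (q.1.choose (2 * q.2 + 1) : ℝ) * ‖x‖ ^ (q.1 - (2 * q.2 + 1)) * ‖z‖ ^ (2 * q.2)

lemma summable_gF {x z : ℂ} (h : ‖x‖ + ‖z‖ < 1) : Summable (gF x z) := by
  have hr0 : (0 : ℝ) ≤ ‖x‖ + ‖z‖ := by positivity
  apply Summable.of_norm_bounded
    (g := fun p : ℕ × ℕ => 1 / ((p.1 : ℝ) + 1) ^ 2 * (2 * (‖x‖ + ‖z‖) ^ p.2))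
  · exact (summable_inv_pow le_rfl).mul_of_nonneg
      ((summable_geometric_of_lt_one hr0 h).mul_left 2)
      (fun l => by positivity) (fun n => by positivity)
  · rintro ⟨l, n⟩
    simp only [gF]
    rw [norm_mul, norm_pow, norm_neg, norm_one, one_pow, one_mul, norm_div, norm_pow,
      norm_cast_add_one]
    match n with
    | 0 => simp; positivity
    | Nat.succ m =>
      have hb : (1 : ℝ) ≤ (l : ℝ) + 1 := le_add_of_nonneg_left (Nat.cast_nonneg l)
      have hD : ‖(x + z) ^ (m + 1) - (x - z) ^ (m + 1)‖ ≤ 2 * (‖x‖ + ‖z‖) ^ (m + 1) := by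
        refine (norm_sub_le _ _).trans ?_
        rw [norm_pow, norm_pow]
        have h1 := pow_le_pow_left₀ (norm_nonneg _) (norm_add_le x z) (m + 1)
        have h2 := pow_le_pow_left₀ (norm_nonneg _) (norm_sub_le x z) (m + 1)
        linarith
      have hpow : ((l : ℝ) + 1) ^ 2 ≤ ((l : ℝ) + 1) ^ (m + 1 + 1) :=
        pow_le_pow_right₀ hb (by omega)
      calc ‖(x + z) ^ (m + 1) - (x - z) ^ (m + 1)‖ / ((l : ℝ) + 1) ^ (m + 1 + 1)
          ≤ 2 * (‖x‖ + ‖z‖) ^ (m + 1) / ((l : ℝ) + 1) ^ 2 :=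
            div_le_div₀ (by positivity) hD (by positivity) hpow
        _ = 1 / ((l : ℝ) + 1) ^ 2 * (2 * (‖x‖ + ‖z‖) ^ (m + 1)) := by ring

lemma HF_nonneg (x z : ℂ) (q : ℕ × ℕ) : 0 ≤ HF x z q := by
  refine mul_nonneg (mul_nonneg (mul_nonneg (mul_nonneg (by norm_num) Mc_nonneg)
    (Nat.cast_nonneg _)) (by positivity)) (by positivity)

lemma summable_HF {x z : ℂ} (hz : z ≠ 0) (h : ‖x‖ + ‖z‖ < 1) : Summable (HF x z) := by
  have hr0 : (0 : ℝ) ≤ ‖x‖ + ‖z‖ := by positivity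
  have hzn : (0 : ℝ) < ‖z‖ := norm_pos_iff.2 hz
  have hvanish : ∀ n b : ℕ, b ∉ range ((n + 1) / 2) → HF x z (n, b) = 0 := by
    intro n b hb
    simp only [Finset.mem_range, not_lt] at hb
    simp only [HF]
    rw [Nat.choose_eq_zero_of_lt (by omega)]
    simp
  rw [summable_prod_of_nonneg (fun q => HF_nonneg x z q)]
  constructor
  · intro n
    exact summable_of_ne_finset_zero (s := range ((n + 1) / 2)) (hvanish n)
  · apply Summable.of_nonneg_of_le
      (fun n => tsum_nonneg fun b => HF_nonneg x z (n, b))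
      (fun n => ?_)
      ((summable_geometric_of_lt_one hr0 h).mul_left (2 * Mc / ‖z‖))
    rw [tsum_eq_sum (hvanish n)]
    calc ∑ b ∈ range ((n + 1) / 2), HF x z (n, b)
        = ∑ b ∈ range ((n + 1) / 2), (2 * Mc / ‖z‖) *
            ((n.choose (2 * b + 1) : ℝ) * ‖x‖ ^ (n - (2 * b + 1)) * ‖z‖ ^ (2 * b + 1)) := by
          refine Finset.sum_congr rfl fun b _ => ?_
          simp only [HF]
          rw [pow_succ, div_mul_eq_mul_div, eq_div_iff (ne_of_gt hzn)]
          ring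
      _ ≤ ∑ j ∈ range (n + 1), (2 * Mc / ‖z‖) *
            ((n.choose j : ℝ) * ‖x‖ ^ (n - j) * ‖z‖ ^ j) := by
          rw [← Finset.sum_image (f := fun j => (2 * Mc / ‖z‖) *
              ((n.choose j : ℝ) * ‖x‖ ^ (n - j) * ‖z‖ ^ j)) (g := fun b => 2 * b + 1)
              (fun a _ b _ hab => by simp at hab; omega)]
          apply Finset.sum_le_sum_of_subset_of_nonneg
          · intro j hj
            simp only [Finset.mem_image, Finset.mem_range] at hj ⊢
            obtain ⟨b, hb, rfl⟩ := hj; omega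
          · intro j _ _
            exact mul_nonneg (div_nonneg (by linarith [Mc_nonneg]) (norm_nonneg z))
              (by positivity)
      _ = 2 * Mc / ‖z‖ * (‖x‖ + ‖z‖) ^ n := by
          rw [← Finset.mul_sum]
          congr 1
          rw [show ‖x‖ + ‖z‖ = ‖z‖ + ‖x‖ from by ring, add_pow]
          exact (Finset.sum_congr rfl fun j _ => by ring).symm

lemma summable_FF {x z : ℂ} (hz : z ≠ 0) (h : ‖x‖ + ‖z‖ < 1) : Summable (FF x z) := by
  apply Summable.of_norm_bounded (summable_HF hz h)
  rintro ⟨n, b⟩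
  simp only [FF, HF]
  rcases n with _ | m
  · rw [Nat.choose_eq_zero_of_lt (by omega)]
    simp
  · calc ‖2 * ((m + 1).choose (2 * b + 1) : ℂ) * S (m + 1 + 1) * x ^ (m + 1 - (2 * b + 1)) *
          z ^ (2 * b)‖
        = 2 * ((m + 1).choose (2 * b + 1) : ℝ) * ‖x‖ ^ (m + 1 - (2 * b + 1)) * ‖z‖ ^ (2 * b) *
            ‖S (m + 1 + 1)‖ := by
          rw [norm_mul, norm_mul, norm_mul, norm_mul, norm_pow, norm_pow,
            Complex.norm_natCast, Complex.norm_ofNat]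
          ring
      _ ≤ 2 * ((m + 1).choose (2 * b + 1) : ℝ) * ‖x‖ ^ (m + 1 - (2 * b + 1)) * ‖z‖ ^ (2 * b) *
            Mc := by
          apply mul_le_mul_of_nonneg_left (norm_S_le (by omega)) (by positivity)
      _ = 2 * Mc * ((m + 1).choose (2 * b + 1) : ℝ) * ‖x‖ ^ (m + 1 - (2 * b + 1)) *
            ‖z‖ ^ (2 * b) := by ring

lemma eF_inj : Function.Injective eF := by
  rintro ⟨a, b⟩ ⟨c, d⟩ h
  simp only [eF, Prod.mk.injEq] at h
  refine Prod.ext ?_ h.2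
  omega

lemma FF_supp (x z : ℂ) : Function.support (FF x z) ⊆ Set.range eF := by
  rintro ⟨n, b⟩ hq
  have hle : 2 * b + 1 ≤ n := by
    by_contra hlt
    apply hq
    simp only [FF]
    rw [Nat.choose_eq_zero_of_lt (by omega)]
    simp
  exact ⟨(n - (2 * b + 1), b), Prod.ext (by simp only [eF]; omega) rfl⟩

end CoeffExpansionAux

set_option maxHeartbeats 1000000 in
open CoeffExpansionAux in
/-- Expanding `(1/z) Σ_{l≥1} (-1)^l (1/(x+z-l) - 1/(x-z-l))` as a power series in
`x` and `z`, the coefficient of `x^{k-2s} z^{2s-2}` (for `k ≥ 2s ≥ 2`) is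
`2 C(k-1,2s-1) Σ_{l≥1} (-1)^{l-1}/l^k`; here the pairs `(k,s)` are parametrized
as `k = p.1 + 2(p.2+1)`, `s = p.2 + 1` over `p : ℕ × ℕ`. -/
theorem coeff_expansion (x z : ℂ) (hz : z ≠ 0) (hsmall : ‖x‖ + ‖z‖ < 1) :
    1 / z * (∑' l : ℕ, (-1 : ℂ) ^ (l + 1) *
        (1 / (x + z - (l + 1)) - 1 / (x - z - (l + 1))))
    = ∑' p : ℕ × ℕ,
        (2 * ((p.1 + 2 * (p.2 + 1) - 1).choose (2 * (p.2 + 1) - 1) : ℂ) *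
          ∑' l : ℕ, (-1 : ℂ) ^ l / ((l : ℂ) + 1) ^ (p.1 + 2 * (p.2 + 1))) *
          x ^ p.1 * z ^ (2 * (p.2 + 1) - 2) := by
  have hsmall' : ‖x‖ + ‖z‖ < 1 := by simpa using hsmall
  have hxz : ‖x + z‖ < 1 := lt_of_le_of_lt (norm_add_le x z) hsmall'
  have hxz' : ‖x - z‖ < 1 := lt_of_le_of_lt (norm_sub_le x z) hsmall'
  have hg : Summable (gF x z) := summable_gF hsmall'
  have hg1 : ∀ l : ℕ, Summable (fun n => gF x z (l, n)) := fun l => hg.prod_factor l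
  have hg2 : ∀ n : ℕ, Summable (fun l => gF x z (l, n)) := fun n => hg.prod_symm.prod_factor n
  have hF : Summable (FF x z) := summable_FF hz hsmall'
  have hFvanish : ∀ n b : ℕ, b ∉ Finset.range ((n + 1) / 2) → FF x z (n, b) = 0 := by
    intro n b hb
    simp only [Finset.mem_range, not_lt] at hb
    simp only [FF]
    rw [Nat.choose_eq_zero_of_lt (by omega)]
    simp
  have step1 : (∑' l : ℕ, (-1 : ℂ) ^ (l + 1) *
      (1 / (x + z - (l + 1)) - 1 / (x - z - (l + 1))))
      = ∑' l : ℕ, ∑' n : ℕ, gF x z (l, n) :=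
    tsum_congr fun l => ((per_l hxz hxz' l).tsum_eq).symm
  have step2 : ∑' l : ℕ, ∑' n : ℕ, gF x z (l, n) = ∑' n : ℕ, ∑' l : ℕ, gF x z (l, n) :=
    (Summable.tsum_comm' (f := fun l n => gF x z (l, n)) hg hg1 hg2).symm
  have step3 : ∀ n : ℕ, ∑' l : ℕ, gF x z (l, n)
      = ((x + z) ^ n - (x - z) ^ n) * S (n + 1) := by
    intro n
    rw [show (fun l : ℕ => gF x z (l, n))
        = fun l : ℕ => ((x + z) ^ n - (x - z) ^ n) * ((-1 : ℂ) ^ l / ((l : ℂ) + 1) ^ (n + 1))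
      from funext fun l => by simp only [gF]; ring]
    exact tsum_mul_left
  calc 1 / z * (∑' l : ℕ, (-1 : ℂ) ^ (l + 1) *
        (1 / (x + z - (l + 1)) - 1 / (x - z - (l + 1))))
      = 1 / z * ∑' n : ℕ, ((x + z) ^ n - (x - z) ^ n) * S (n + 1) := by
        rw [step1, step2, tsum_congr step3]
    _ = ∑' n : ℕ, 1 / z * (((x + z) ^ n - (x - z) ^ n) * S (n + 1)) := tsum_mul_left.symm
    _ = ∑' n : ℕ, ∑' b : ℕ, FF x z (n, b) := by
        refine tsum_congr fun n => ?_
        rw [tsum_eq_sum (hFvanish n), binom_diff x z n, Finset.sum_mul, Finset.mul_sum]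
        refine Finset.sum_congr rfl fun b _ => ?_
        simp only [FF]
        rw [pow_succ]
        field_simp
    _ = ∑' q : ℕ × ℕ, FF x z q := (Summable.tsum_prod' hF hF.prod_factor).symm
    _ = ∑' p : ℕ × ℕ, FF x z (eF p) := (eF_inj.tsum_eq (FF_supp x z)).symm
    _ = ∑' p : ℕ × ℕ,
        (2 * ((p.1 + 2 * (p.2 + 1) - 1).choose (2 * (p.2 + 1) - 1) : ℂ) *
          ∑' l : ℕ, (-1 : ℂ) ^ l / ((l : ℂ) + 1) ^ (p.1 + 2 * (p.2 + 1))) *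
          x ^ p.1 * z ^ (2 * (p.2 + 1) - 2) := by
        refine tsum_congr fun p => ?_
        have e1 : p.1 + 2 * (p.2 + 1) - 1 = p.1 + 2 * p.2 + 1 := by omega
        have e2 : 2 * (p.2 + 1) - 1 = 2 * p.2 + 1 := by omega
        have e3 : 2 * (p.2 + 1) - 2 = 2 * p.2 := by omega
        have e4 : p.1 + 2 * (p.2 + 1) = p.1 + 2 * p.2 + 1 + 1 := by omega
        have e5 : p.1 + 2 * p.2 + 1 - (2 * p.2 + 1) = p.1 := by omega
        simp only [FF, eF, S]
        rw [e1, e2, e3, e4, e5]
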